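/- arXiv:2501.05737 — 3 statements merged into one kernel-verified Lean document; each statement's English description precedes it below -/
import Mathlib

section
/- Optimality gap of VRA-DGT (Lemma 3.4): under the stated assumptions, for every k ≥ 1 and any two positive scalars ε₁, ε₂ the VRA-DGT iterates satisfy E‖x̄_{k+1} − x*‖² ≤ (1 − μα_k + γ_k/ε₁ + α_k/ε₂ + 6L²α_k²)·E‖x̄_k − x*‖² + ((2α_kε₂ + 6α_k²)·L²/n)·E‖x_k − 𝐱̄_k‖² + (2γ²(α_kε₂ + 3α_k²)/n)·E‖e^s_k‖² + ((ε₁γ_k + 2γ_k²)/n)·E‖e^x_k‖². -/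
open MeasureTheory Finset
open scoped RealInnerProductSpace

noncomputable section

variable {n d : ℕ}

/-- Row average `Ā = (1/n) ∑ᵢ aᵢ` of an `n × d` matrix given by its rows. -/
def rowAvg (A : Fin n → EuclideanSpace ℝ (Fin d)) : EuclideanSpace ℝ (Fin d) :=
  (n : ℝ)⁻¹ • ∑ i, A i

/-- Squared Frobenius norm `‖A‖²` of a matrix given by its rows. -/
def fro2 (A : Fin n → EuclideanSpace ℝ (Fin d)) : ℝ := ∑ i, ‖A i‖ ^ 2

/-- Squared Frobenius norm `‖A − 𝟏·Āᵀ‖²` of the deviation from consensus. -/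
def dev2 (A : Fin n → EuclideanSpace ℝ (Fin d)) : ℝ := ∑ i, ‖A i - rowAvg A‖ ^ 2

/-- Squared Frobenius norm of an `n × n` weight matrix. -/
def mFro2 (M : Matrix (Fin n) (Fin n) ℝ) : ℝ := ∑ i, ∑ j, (M i j) ^ 2

/-- The mixed weight matrix `W_c = (1−c)·I + c·W`. -/
def mixW (W : Matrix (Fin n) (Fin n) ℝ) (c : ℝ) : Matrix (Fin n) (Fin n) ℝ :=
  (1 - c) • (1 : Matrix (Fin n) (Fin n) ℝ) + c • W

/-- Multiplication of an `n × d` matrix (given by rows) by an `n × n` matrix. -/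
def wmul (M : Matrix (Fin n) (Fin n) ℝ) (A : Fin n → EuclideanSpace ℝ (Fin d)) :
    Fin n → EuclideanSpace ℝ (Fin d) := fun i => ∑ j, M i j • A j

/-- `W` with its diagonal set to zero. -/
def offdiag (W : Matrix (Fin n) (Fin n) ℝ) : Matrix (Fin n) (Fin n) ℝ :=
  Matrix.of fun i j => if i = j then (0 : ℝ) else W i j

/-- The global objective `f = (1/n) ∑ᵢ fᵢ`. -/
def fglob (f : Fin n → EuclideanSpace ℝ (Fin d) → ℝ) :
    EuclideanSpace ℝ (Fin d) → ℝ := fun z => (n : ℝ)⁻¹ * ∑ i, f i z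

/-- The matrix of local gradients `g_k`, whose `i`-th row is `∇fᵢ(x_{i,k})`. -/
def gmat (f : Fin n → EuclideanSpace ℝ (Fin d) → ℝ)
    (A : Fin n → EuclideanSpace ℝ (Fin d)) : Fin n → EuclideanSpace ℝ (Fin d) :=
  fun i => gradient (f i) (A i)

/- ### Auxiliary lemmas -/

lemma young_ineq' {p q e : ℝ} (he : 0 < e) : 2*(p*q) ≤ p^2/e + e*q^2 := by
  have h : p^2/e + e*q^2 - 2*(p*q) = (p - e*q)^2 / e := by field_simp; ring
  nlinarith [sq_nonneg (p - e*q), div_nonneg (sq_nonneg (p - e*q)) he.le]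

lemma sq3_ineq {x y z : ℝ} : (x+y+z)^2 ≤ 3*x^2+3*y^2+3*z^2 := by
  nlinarith [sq_nonneg (x-y), sq_nonneg (x-z), sq_nonneg (y-z)]

lemma sq2_ineq {x y : ℝ} : (x+y)^2 ≤ 2*x^2+2*y^2 := by nlinarith [sq_nonneg (x-y)]

lemma sq_mono' {s t : ℝ} (hs : 0 ≤ s) (h : s ≤ t) : s^2 ≤ t^2 := by nlinarith

/-- The core deterministic estimate behind Lemma 3.4. -/
lemma key_ineq {E : Type*} [NormedAddCommGroup E] [InnerProductSpace ℝ E]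
    (μs L a c γ e1 e2 Dx Es Ex : ℝ)
    (r u h gd eb : E)
    (ha : 0 < a) (hc : 0 < c) (hμ : 0 < μs)
    (hL : 0 ≤ L) (he1 : 0 < e1) (he2 : 0 < e2)
    (hDx : 0 ≤ Dx) (hEs : 0 ≤ Es) (hEx : 0 ≤ Ex)
    (hrh : μs * ‖r‖ ^ 2 ≤ ⟪h, r⟫)
    (hh : ‖h‖ ≤ L * ‖r‖)
    (hgd : ‖gd‖ ^ 2 ≤ L ^ 2 * Dx)
    (hu : ‖u‖ ^ 2 ≤ Ex)
    (heb : ‖eb‖ ^ 2 ≤ Es) :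
    ‖r + c • u - a • (h + gd + γ • eb)‖ ^ 2 ≤
      (1 - μs * a + c / e1 + a / e2 + 6 * L ^ 2 * a ^ 2) * ‖r‖ ^ 2
      + (2 * a * e2 + 6 * a ^ 2) * L ^ 2 * Dx
      + 2 * γ ^ 2 * (a * e2 + 3 * a ^ 2) * Es
      + (e1 * c + 2 * c ^ 2) * Ex := by
  set Y := h + gd + γ • eb with hY
  set w := gd + γ • eb with hw
  have hexp : ‖r + (c • u - a • Y)‖^2 = ‖r‖^2 + 2*⟪r, c • u - a • Y⟫ + ‖c • u - a • Y‖^2 :=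
    norm_add_sq_real r _
  have hYw : Y = h + w := by rw [hY, hw]; abel
  have hinner : ⟪r, c • u - a • Y⟫ = c * ⟪r, u⟫ - a * ⟪r, h⟫ - a * ⟪r, w⟫ := by
    rw [hYw]
    simp only [inner_sub_right, inner_add_right, real_inner_smul_right]
    ring
  -- norm of Y
  have hY2 : ‖Y‖^2 ≤ 3*‖h‖^2 + 3*‖gd‖^2 + 3*γ^2*‖eb‖^2 := by
    have h1 : ‖Y‖ ≤ ‖h‖ + ‖gd‖ + |γ| * ‖eb‖ := by
      calc ‖Y‖ ≤ ‖h + gd‖ + ‖γ • eb‖ := norm_add_le _ _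
        _ ≤ ‖h‖ + ‖gd‖ + |γ| * ‖eb‖ := by
            rw [norm_smul, Real.norm_eq_abs]
            exact add_le_add (norm_add_le _ _) le_rfl
    have h2 : ‖Y‖^2 ≤ (‖h‖+‖gd‖+|γ| * ‖eb‖)^2 := sq_mono' (norm_nonneg Y) h1
    have h3 := sq3_ineq (x := ‖h‖) (y := ‖gd‖) (z := |γ| * ‖eb‖)
    have h4 : (|γ| * ‖eb‖)^2 = γ^2*‖eb‖^2 := by rw [mul_pow, sq_abs]
    linarith
  have hw2 : ‖w‖^2 ≤ 2*‖gd‖^2 + 2*γ^2*‖eb‖^2 := by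
    have h1 : ‖w‖ ≤ ‖gd‖ + |γ| * ‖eb‖ := by
      calc ‖w‖ ≤ ‖gd‖ + ‖γ • eb‖ := norm_add_le _ _
        _ = ‖gd‖ + |γ| * ‖eb‖ := by rw [norm_smul, Real.norm_eq_abs]
    have h2 : ‖w‖^2 ≤ (‖gd‖+|γ| * ‖eb‖)^2 := sq_mono' (norm_nonneg w) h1
    have h3 := sq2_ineq (x := ‖gd‖) (y := |γ| * ‖eb‖)
    have h4 : (|γ| * ‖eb‖)^2 = γ^2*‖eb‖^2 := by rw [mul_pow, sq_abs]
    linarith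
  have hsq : ‖c • u - a • Y‖^2 ≤ 2*c^2*‖u‖^2 + 2*a^2*‖Y‖^2 := by
    have h1 : ‖c • u - a • Y‖ ≤ c*‖u‖ + a*‖Y‖ := by
      calc ‖c • u - a • Y‖ ≤ ‖c • u‖ + ‖a • Y‖ := norm_sub_le _ _
        _ = c*‖u‖ + a*‖Y‖ := by
            rw [norm_smul, norm_smul, Real.norm_eq_abs, Real.norm_eq_abs,
              abs_of_pos hc, abs_of_pos ha]
    have h2 : ‖c • u - a • Y‖^2 ≤ (c*‖u‖ + a*‖Y‖)^2 := sq_mono' (norm_nonneg _) h1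
    have h3 := sq2_ineq (x := c*‖u‖) (y := a*‖Y‖)
    have h4 : (c*‖u‖)^2 = c^2*‖u‖^2 := by ring
    have h5 : (a*‖Y‖)^2 = a^2*‖Y‖^2 := by ring
    linarith
  -- cross terms
  have c1 : 2*(⟪r,u⟫) ≤ ‖r‖^2/e1 + e1*‖u‖^2 := by
    have hy := young_ineq' (p := ‖r‖) (q := ‖u‖) he1
    have hru := real_inner_le_norm r u
    linarith
  have c1' : 2*(c*⟪r,u⟫) ≤ c / e1 * ‖r‖^2 + e1 * c * ‖u‖^2 := by
    calc 2*(c*⟪r,u⟫) = c*(2*⟪r,u⟫) := by ring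
      _ ≤ c*(‖r‖^2/e1 + e1*‖u‖^2) := mul_le_mul_of_nonneg_left c1 hc.le
      _ = c / e1 * ‖r‖^2 + e1 * c * ‖u‖^2 := by ring
  have c2 : a * (μs * ‖r‖^2) ≤ a * ⟪r,h⟫ := by
    have : μs * ‖r‖^2 ≤ ⟪r,h⟫ := by rw [real_inner_comm]; exact hrh
    exact mul_le_mul_of_nonneg_left this ha.le
  have c3 : 2*(-⟪r,w⟫) ≤ ‖r‖^2/e2 + e2*‖w‖^2 := by
    have h1 : -⟪r,w⟫ ≤ ‖r‖*‖w‖ := by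
      have := abs_real_inner_le_norm r w
      cases abs_cases (⟪r,w⟫) with
      | inl h => linarith [real_inner_le_norm r w, mul_nonneg (norm_nonneg r) (norm_nonneg w)]
      | inr h => linarith
    have hy := young_ineq' (p := ‖r‖) (q := ‖w‖) he2
    linarith
  have c3' : 2*a*(-⟪r,w⟫) ≤ a / e2 * ‖r‖^2 + a * e2 * ‖w‖^2 := by
    calc 2*a*(-⟪r,w⟫) = a*(2*(-⟪r,w⟫)) := by ring
      _ ≤ a*(‖r‖^2/e2 + e2*‖w‖^2) := mul_le_mul_of_nonneg_left c3 ha.le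
      _ = a / e2 * ‖r‖^2 + a * e2 * ‖w‖^2 := by ring
  -- scaled bounds
  have t4 : ‖h‖^2 ≤ L^2 * ‖r‖^2 := by
    have h2 : ‖h‖^2 ≤ (L*‖r‖)^2 := sq_mono' (norm_nonneg h) hh
    nlinarith [h2]
  have hY2' : 2*a^2*‖Y‖^2 ≤ 2*a^2*(3*(L^2*‖r‖^2) + 3*‖gd‖^2 + 3*γ^2*‖eb‖^2) := by
    have h1 := mul_le_mul_of_nonneg_left hY2 (show (0:ℝ) ≤ 2*a^2 by positivity)
    have h2 := mul_le_mul_of_nonneg_left t4 (show (0:ℝ) ≤ 6*a^2 by positivity)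
    linarith
  have hw2' : a*e2*‖w‖^2 ≤ a*e2*(2*‖gd‖^2 + 2*γ^2*‖eb‖^2) := by
    exact mul_le_mul_of_nonneg_left hw2 (by positivity)
  have tU1 : e1*c*‖u‖^2 ≤ e1*c*Ex := mul_le_mul_of_nonneg_left hu (by positivity)
  have tU2 : 2*c^2*‖u‖^2 ≤ 2*c^2*Ex := mul_le_mul_of_nonneg_left hu (by positivity)
  have tG1 : 2*a*e2*‖gd‖^2 ≤ 2*a*e2*(L^2*Dx) := mul_le_mul_of_nonneg_left hgd (by positivity)
  have tG2 : 6*a^2*‖gd‖^2 ≤ 6*a^2*(L^2*Dx) := mul_le_mul_of_nonneg_left hgd (by positivity)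
  have tB1 : 2*a*e2*γ^2*‖eb‖^2 ≤ 2*a*e2*γ^2*Es := mul_le_mul_of_nonneg_left heb (by positivity)
  have tB2 : 6*a^2*γ^2*‖eb‖^2 ≤ 6*a^2*γ^2*Es := mul_le_mul_of_nonneg_left heb (by positivity)
  have tR : 0 ≤ μs * a * ‖r‖^2 := by positivity
  have hrw : r + c • u - a • Y = r + (c • u - a • Y) := by abel
  rw [hrw, hexp, hinner]
  linarith

lemma avg_sq_le {E : Type*} [NormedAddCommGroup E] [InnerProductSpace ℝ E] {n : ℕ} (hn : 0 < n)
    (v : Fin n → E) : ‖(n:ℝ)⁻¹ • ∑ i, v i‖^2 ≤ (n:ℝ)⁻¹ * ∑ i, ‖v i‖^2 := by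
  have h1 : ‖∑ i, v i‖ ≤ ∑ i, ‖v i‖ := norm_sum_le _ _
  have h2 : (∑ i, ‖v i‖)^2 ≤ (n:ℝ) * ∑ i, ‖v i‖^2 := by
    have := sq_sum_le_card_mul_sum_sq (s := Finset.univ) (f := fun i => ‖v i‖)
    simpa using this
  have h4 : ‖∑ i, v i‖^2 ≤ (n:ℝ) * ∑ i, ‖v i‖^2 := by
    nlinarith [norm_nonneg (∑ i, v i),
      Finset.sum_nonneg (fun i (_ : i ∈ Finset.univ) => norm_nonneg (v i))]
  have h3 : ‖(n:ℝ)⁻¹ • ∑ i, v i‖ = (n:ℝ)⁻¹ * ‖∑ i, v i‖ := by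
    rw [norm_smul]; simp [Real.norm_eq_abs, abs_of_nonneg (by positivity : (0:ℝ) ≤ (n:ℝ)⁻¹)]
  have hne : (n:ℝ) ≠ 0 := by exact_mod_cast hn.ne'
  rw [h3, mul_pow]
  calc (n:ℝ)⁻¹^2 * ‖∑ i, v i‖^2 ≤ (n:ℝ)⁻¹^2 * ((n:ℝ) * ∑ i, ‖v i‖^2) :=
        mul_le_mul_of_nonneg_left h4 (by positivity)
    _ = (n:ℝ)⁻¹ * ∑ i, ‖v i‖^2 := by field_simp

lemma rowAvg_sq_le (hn : 0 < n) (V : Fin n → EuclideanSpace ℝ (Fin d)) :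
    ‖rowAvg V‖^2 ≤ fro2 V / n := by
  simpa [rowAvg, fro2, div_eq_mul_inv, mul_comm] using avg_sq_le hn V

lemma gradient_fglob (f : Fin n → EuclideanSpace ℝ (Fin d) → ℝ)
    (hdiff : ∀ i, Differentiable ℝ (f i)) (a : EuclideanSpace ℝ (Fin d)) :
    gradient (fglob f) a = (n:ℝ)⁻¹ • ∑ i, gradient (f i) a := by
  have hsum : DifferentiableAt ℝ (fun z => ∑ i, f i z) a :=
    DifferentiableAt.fun_sum (fun i _ => (hdiff i).differentiableAt)
  have hfd : fderiv ℝ (fglob f) a = (n:ℝ)⁻¹ • ∑ i, fderiv ℝ (f i) a := by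
    have h1 : fglob f = fun z => (n:ℝ)⁻¹ * ∑ i, f i z := rfl
    rw [h1, fderiv_const_mul hsum, fderiv_fun_sum (fun i _ => (hdiff i).differentiableAt)]
  unfold gradient
  rw [hfd, _root_.map_smul, map_sum]

lemma rowAvg_wmul {M : Matrix (Fin n) (Fin n) ℝ} (hc : ∀ j, ∑ i, M i j = 1)
    (A : Fin n → EuclideanSpace ℝ (Fin d)) : rowAvg (wmul M A) = rowAvg A := by
  unfold rowAvg wmul
  congr 1
  rw [Finset.sum_comm]
  have : ∀ j, ∑ i, M i j • A j = A j := by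
    intro j
    rw [← Finset.sum_smul, hc j, one_smul]
  simp_rw [this]

lemma mixW_col {W : Matrix (Fin n) (Fin n) ℝ} (hWcol : ∀ j, ∑ i, W i j = 1)
    (c : ℝ) (j : Fin n) : ∑ i, mixW W c i j = 1 := by
  unfold mixW
  simp only [Matrix.add_apply, Matrix.smul_apply, Matrix.one_apply, smul_eq_mul,
    Finset.sum_add_distrib]
  rw [← Finset.mul_sum, ← Finset.mul_sum, hWcol j]
  simp [Finset.sum_ite_eq']

lemma rowAvg_add (P Q : Fin n → EuclideanSpace ℝ (Fin d)) :
    rowAvg (fun i => P i + Q i) = rowAvg P + rowAvg Q := by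
  simp [rowAvg, Finset.sum_add_distrib, smul_add]

lemma rowAvg_sub (P Q : Fin n → EuclideanSpace ℝ (Fin d)) :
    rowAvg (fun i => P i - Q i) = rowAvg P - rowAvg Q := by
  simp [rowAvg, Finset.sum_sub_distrib, smul_sub]

lemma rowAvg_smul (c : ℝ) (P : Fin n → EuclideanSpace ℝ (Fin d)) :
    rowAvg (fun i => c • P i) = c • rowAvg P := by
  unfold rowAvg
  rw [show ∑ i, c • P i = c • ∑ i, P i from (Finset.smul_sum).symm, smul_comm]

/-- **Lemma 3.4 (optimality gap of VRA-DGT).** -/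
theorem vra_dgt_optimality_gap
    {Ω : Type*} {m0 : MeasurableSpace Ω} (μ : Measure Ω) [IsProbabilityMeasure μ]
    (hn : 0 < n) (hd : 0 < d)
    (f : Fin n → EuclideanSpace ℝ (Fin d) → ℝ)
    (L μs ηw : ℝ) (xstar : EuclideanSpace ℝ (Fin d))
    (W : Matrix (Fin n) (Fin n) ℝ)
    (α γk : ℕ → ℝ) (γ : ℝ)
    (x y ex es : ℕ → Ω → Fin n → EuclideanSpace ℝ (Fin d))
    -- Assumption 3.1: the local functions are L-smooth and f is μ-strongly convex
    (hdiff : ∀ i, Differentiable ℝ (f i))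
    (hLip : ∀ i a b, ‖gradient (f i) a - gradient (f i) b‖ ≤ L * ‖a - b‖)
    (hμ : 0 < μs)
    (hsc : ∀ a b, fglob f b ≥
      fglob f a + ⟪gradient (fglob f) a, b - a⟫ + μs / 2 * ‖a - b‖ ^ 2)
    (hopt : gradient (fglob f) xstar = 0)
    -- Assumption 3.2: W is nonnegative doubly stochastic, with spectral gap ηw
    (hWnn : ∀ i j, 0 ≤ W i j)
    (hWrow : ∀ i, ∑ j, W i j = 1) (hWcol : ∀ j, ∑ i, W i j = 1)
    (hηw : ηw ∈ Set.Ioc (0 : ℝ) 1)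
    (hspec : ∀ c ∈ Set.Icc (0 : ℝ) 1, ∀ v : Fin n → ℝ,
      ∑ i, (∑ j, (mixW W c i j - (n : ℝ)⁻¹) * v j) ^ 2
        ≤ (1 - c * ηw) ^ 2 * ∑ i, (v i) ^ 2)
    -- algorithm parameters
    (hα : ∀ k, 0 < α k) (hγk : ∀ k, γk k ∈ Set.Ioc (0 : ℝ) 1)
    (hγ : γ ∈ Set.Ioc (0 : ℝ) 1)
    -- VRA-DGT recursions
    (hxrec : ∀ k, 1 ≤ k → ∀ ω i, x (k + 1) ω i
      = wmul (mixW W (γk k)) (x k ω) i + γk k • ex k ω i - α k • y k ω i)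
    (hyrec : ∀ k, 1 ≤ k → ∀ ω i, y (k + 1) ω i
      = wmul (mixW W γ) (y k ω) i
        + (gmat f (x (k + 1) ω) i + γ • es (k + 1) ω i)
        - (gmat f (x k ω) i + γ • es k ω i))
    (hy1 : ∀ ω, rowAvg (y 1 ω) = rowAvg (gmat f (x 1 ω)) + γ • rowAvg (es 1 ω))
    -- integrability of all second moments involved
    (hIy : ∀ k, Integrable (fun ω => dev2 (y k ω)) μ)
    (hIx : ∀ k, Integrable (fun ω => dev2 (x k ω)) μ)
    (hIopt : ∀ k, Integrable (fun ω => ‖rowAvg (x k ω) - xstar‖ ^ 2) μ)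
    (hIex : ∀ k, Integrable (fun ω => fro2 (ex k ω)) μ)
    (hIes : ∀ k, Integrable (fun ω => fro2 (es k ω)) μ) :
    ∀ k, 1 ≤ k → ∀ ε₁ ε₂ : ℝ, 0 < ε₁ → 0 < ε₂ →
      ∫ ω, ‖rowAvg (x (k + 1) ω) - xstar‖ ^ 2 ∂μ
        ≤ (1 - μs * α k + γk k / ε₁ + α k / ε₂ + 6 * L ^ 2 * α k ^ 2) *
            ∫ ω, ‖rowAvg (x k ω) - xstar‖ ^ 2 ∂μ
          + (2 * α k * ε₂ + 6 * α k ^ 2) * L ^ 2 / n * ∫ ω, dev2 (x k ω) ∂μ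
          + 2 * γ ^ 2 * (α k * ε₂ + 3 * α k ^ 2) / n * ∫ ω, fro2 (es k ω) ∂μ
          + (ε₁ * γk k + 2 * γk k ^ 2) / n * ∫ ω, fro2 (ex k ω) ∂μ := by
  intro k hk ε₁ ε₂ hε₁ hε₂
  have hnR : (0:ℝ) < n := by exact_mod_cast hn
  -- L is nonnegative
  have hL0 : 0 ≤ L := by
    have i0 : Fin n := ⟨0, hn⟩
    have h1 := hLip i0 0 (EuclideanSpace.single ⟨0, hd⟩ (1:ℝ))
    have h2 : ‖(0 : EuclideanSpace ℝ (Fin d)) - EuclideanSpace.single ⟨0, hd⟩ (1:ℝ)‖ = 1 := by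
      rw [zero_sub, norm_neg, EuclideanSpace.norm_single]; norm_num
    rw [h2, mul_one] at h1
    exact le_trans (norm_nonneg _) h1
  -- strong-convexity inner product bound
  have hmono : ∀ a : EuclideanSpace ℝ (Fin d),
      μs * ‖a - xstar‖^2 ≤ ⟪gradient (fglob f) a, a - xstar⟫ := by
    intro a
    have h1 := hsc a xstar
    have h2 := hsc xstar a
    rw [hopt] at h2
    simp only [inner_zero_left] at h2
    have hr : ⟪gradient (fglob f) a, xstar - a⟫ = -⟪gradient (fglob f) a, a - xstar⟫ := by
      rw [← inner_neg_right, neg_sub]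
    rw [hr] at h1
    rw [norm_sub_rev xstar a] at h2
    linarith
  -- Lipschitz bound for the global gradient at the optimum
  have hLg : ∀ a : EuclideanSpace ℝ (Fin d),
      ‖gradient (fglob f) a‖ ≤ L * ‖a - xstar‖ := by
    intro a
    have hrepr : gradient (fglob f) a
        = (n:ℝ)⁻¹ • ∑ i, (gradient (f i) a - gradient (f i) xstar) := by
      rw [Finset.sum_sub_distrib, smul_sub, ← gradient_fglob f hdiff, ← gradient_fglob f hdiff,
        hopt, sub_zero]
    rw [hrepr, norm_smul]
    have hsum : ‖∑ i, (gradient (f i) a - gradient (f i) xstar)‖ ≤ ∑ i : Fin n, L * ‖a - xstar‖ :=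
      le_trans (norm_sum_le _ _) (Finset.sum_le_sum fun i _ => hLip i a xstar)
    have hcard : ∑ _i : Fin n, L * ‖a - xstar‖ = n * (L * ‖a - xstar‖) := by
      rw [Finset.sum_const, card_univ, Fintype.card_fin, nsmul_eq_mul]
    calc ‖(n:ℝ)⁻¹‖ * ‖∑ i, (gradient (f i) a - gradient (f i) xstar)‖
        ≤ (n:ℝ)⁻¹ * ((n:ℝ) * (L * ‖a - xstar‖)) := by
          rw [Real.norm_eq_abs, abs_of_nonneg (by positivity : (0:ℝ) ≤ (n:ℝ)⁻¹)]
          exact mul_le_mul_of_nonneg_left (by rw [← hcard]; exact hsum) (by positivity)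
      _ = L * ‖a - xstar‖ := by field_simp
  -- deviation bound for the averaged gradient
  have hgdb : ∀ A : Fin n → EuclideanSpace ℝ (Fin d),
      ‖rowAvg (gmat f A) - gradient (fglob f) (rowAvg A)‖^2 ≤ L^2 * (dev2 A / n) := by
    intro A
    have hrepr : rowAvg (gmat f A) - gradient (fglob f) (rowAvg A)
        = (n:ℝ)⁻¹ • ∑ i, (gradient (f i) (A i) - gradient (f i) (rowAvg A)) := by
      unfold rowAvg gmat
      rw [gradient_fglob f hdiff, Finset.sum_sub_distrib, smul_sub]
    rw [hrepr]
    refine le_trans (avg_sq_le hn _) ?_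
    have hsum : ∑ i, ‖gradient (f i) (A i) - gradient (f i) (rowAvg A)‖^2
        ≤ ∑ i, L^2 * ‖A i - rowAvg A‖^2 := by
      refine Finset.sum_le_sum fun i _ => ?_
      have h2 := sq_mono' (norm_nonneg _) (hLip i (A i) (rowAvg A))
      calc ‖gradient (f i) (A i) - gradient (f i) (rowAvg A)‖^2
          ≤ (L * ‖A i - rowAvg A‖)^2 := h2
        _ = L^2 * ‖A i - rowAvg A‖^2 := by ring
    calc (n:ℝ)⁻¹ * ∑ i, ‖gradient (f i) (A i) - gradient (f i) (rowAvg A)‖^2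
        ≤ (n:ℝ)⁻¹ * ∑ i, L^2 * ‖A i - rowAvg A‖^2 :=
          mul_le_mul_of_nonneg_left hsum (by positivity)
      _ = L^2 * (dev2 A / n) := by unfold dev2; rw [← Finset.mul_sum]; ring
  -- the average of y tracks the average gradient
  have hybar : ∀ m, 1 ≤ m → ∀ ω,
      rowAvg (y m ω) = rowAvg (gmat f (x m ω)) + γ • rowAvg (es m ω) := by
    intro m
    induction m with
    | zero => intro h; exact absurd h (by norm_num)
    | succ m ih =>
      intro _ ω
      rcases Nat.eq_zero_or_pos m with hm0 | hm1
      · subst hm0; exact hy1 ω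
      · have hfun : y (m+1) ω = fun i => wmul (mixW W γ) (y m ω) i
            + (gmat f (x (m+1) ω) i + γ • es (m+1) ω i)
            - (gmat f (x m ω) i + γ • es m ω i) := funext (hyrec m hm1 ω)
        rw [hfun]
        simp only [rowAvg_sub, rowAvg_add, rowAvg_smul]
        rw [rowAvg_wmul (mixW_col hWcol γ), ih hm1 ω]
        abel
  -- the averaged x recursion
  have hxbar : ∀ ω, rowAvg (x (k+1) ω)
      = rowAvg (x k ω) + γk k • rowAvg (ex k ω) - α k • rowAvg (y k ω) := by
    intro ω
    have hfun : x (k+1) ω = fun i => wmul (mixW W (γk k)) (x k ω) i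
        + γk k • ex k ω i - α k • y k ω i := funext (hxrec k hk ω)
    rw [hfun]
    simp only [rowAvg_sub, rowAvg_add, rowAvg_smul]
    rw [rowAvg_wmul (mixW_col hWcol (γk k))]
  -- pointwise estimate
  have hpt : ∀ ω, ‖rowAvg (x (k+1) ω) - xstar‖^2
      ≤ (1 - μs * α k + γk k / ε₁ + α k / ε₂ + 6 * L ^ 2 * α k ^ 2) *
            ‖rowAvg (x k ω) - xstar‖ ^ 2
          + (2 * α k * ε₂ + 6 * α k ^ 2) * L ^ 2 / n * dev2 (x k ω)
          + 2 * γ ^ 2 * (α k * ε₂ + 3 * α k ^ 2) / n * fro2 (es k ω)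
          + (ε₁ * γk k + 2 * γk k ^ 2) / n * fro2 (ex k ω) := by
    intro ω
    set m := rowAvg (x k ω) with hm
    set r := m - xstar with hr
    set h := gradient (fglob f) m with hh
    set gd := rowAvg (gmat f (x k ω)) - h with hgd
    set u := rowAvg (ex k ω) with hu
    set eb := rowAvg (es k ω) with heb
    have hvec : rowAvg (x (k+1) ω) - xstar = r + γk k • u - α k • (h + gd + γ • eb) := by
      have hsimp : h + gd + γ • eb = rowAvg (gmat f (x k ω)) + γ • eb := by
        rw [hgd]; abel
      rw [hsimp, hxbar ω, hybar k hk ω]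
      rw [hr, hm]
      abel
    have hdev0 : (0:ℝ) ≤ dev2 (x k ω) / n := by
      have : (0:ℝ) ≤ dev2 (x k ω) := Finset.sum_nonneg fun i _ => sq_nonneg _
      positivity
    have hes0 : (0:ℝ) ≤ fro2 (es k ω) / n := by
      have : (0:ℝ) ≤ fro2 (es k ω) := Finset.sum_nonneg fun i _ => sq_nonneg _
      positivity
    have hex0 : (0:ℝ) ≤ fro2 (ex k ω) / n := by
      have : (0:ℝ) ≤ fro2 (ex k ω) := Finset.sum_nonneg fun i _ => sq_nonneg _
      positivity
    have hky := key_ineq μs L (α k) (γk k) γ ε₁ ε₂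
      (dev2 (x k ω) / n) (fro2 (es k ω) / n) (fro2 (ex k ω) / n)
      r u h gd eb
      (hα k) (hγk k).1 hμ hL0 hε₁ hε₂ hdev0 hes0 hex0
      (hmono m) (hLg m) (hgdb (x k ω)) (rowAvg_sq_le hn _) (rowAvg_sq_le hn _)
    calc ‖rowAvg (x (k+1) ω) - xstar‖^2
        = ‖r + γk k • u - α k • (h + gd + γ • eb)‖^2 := by rw [hvec]
      _ ≤ (1 - μs * α k + γk k / ε₁ + α k / ε₂ + 6 * L ^ 2 * α k ^ 2) * ‖r‖ ^ 2
          + (2 * α k * ε₂ + 6 * α k ^ 2) * L ^ 2 * (dev2 (x k ω) / n)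
          + 2 * γ ^ 2 * (α k * ε₂ + 3 * α k ^ 2) * (fro2 (es k ω) / n)
          + (ε₁ * γk k + 2 * γk k ^ 2) * (fro2 (ex k ω) / n) := hky
      _ = (1 - μs * α k + γk k / ε₁ + α k / ε₂ + 6 * L ^ 2 * α k ^ 2) *
            ‖rowAvg (x k ω) - xstar‖ ^ 2
          + (2 * α k * ε₂ + 6 * α k ^ 2) * L ^ 2 / n * dev2 (x k ω)
          + 2 * γ ^ 2 * (α k * ε₂ + 3 * α k ^ 2) / n * fro2 (es k ω)
          + (ε₁ * γk k + 2 * γk k ^ 2) / n * fro2 (ex k ω) := by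
            rw [hr, hm]; ring
  -- integrate the pointwise estimate
  have hA := (hIopt k).const_mul (1 - μs * α k + γk k / ε₁ + α k / ε₂ + 6 * L ^ 2 * α k ^ 2)
  have hB := (hIx k).const_mul ((2 * α k * ε₂ + 6 * α k ^ 2) * L ^ 2 / n)
  have hC := (hIes k).const_mul (2 * γ ^ 2 * (α k * ε₂ + 3 * α k ^ 2) / n)
  have hD := (hIex k).const_mul ((ε₁ * γk k + 2 * γk k ^ 2) / n)
  have hAB : Integrable (fun ω =>
      (1 - μs * α k + γk k / ε₁ + α k / ε₂ + 6 * L ^ 2 * α k ^ 2) * ‖rowAvg (x k ω) - xstar‖ ^ 2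
      + (2 * α k * ε₂ + 6 * α k ^ 2) * L ^ 2 / n * dev2 (x k ω)) μ := hA.add hB
  have hABC : Integrable (fun ω =>
      (1 - μs * α k + γk k / ε₁ + α k / ε₂ + 6 * L ^ 2 * α k ^ 2) * ‖rowAvg (x k ω) - xstar‖ ^ 2
      + (2 * α k * ε₂ + 6 * α k ^ 2) * L ^ 2 / n * dev2 (x k ω)
      + 2 * γ ^ 2 * (α k * ε₂ + 3 * α k ^ 2) / n * fro2 (es k ω)) μ := hAB.add hC
  have hABCD : Integrable (fun ω =>
      (1 - μs * α k + γk k / ε₁ + α k / ε₂ + 6 * L ^ 2 * α k ^ 2) * ‖rowAvg (x k ω) - xstar‖ ^ 2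
      + (2 * α k * ε₂ + 6 * α k ^ 2) * L ^ 2 / n * dev2 (x k ω)
      + 2 * γ ^ 2 * (α k * ε₂ + 3 * α k ^ 2) / n * fro2 (es k ω)
      + (ε₁ * γk k + 2 * γk k ^ 2) / n * fro2 (ex k ω)) μ := hABC.add hD
  have hle := integral_mono (μ := μ) (hIopt (k+1)) hABCD hpt
  refine le_trans hle (le_of_eq ?_)
  rw [integral_add hABC hD, integral_add hAB hC, integral_add hA hB,
    integral_const_mul, integral_const_mul, integral_const_mul, integral_const_mul]

end
end

section
/- Agreement error of VRA-DSGT (Lemma 3.7): under the stated assumptions, for every k ≥ 1 the VRA-DSGT iterates satisfy E‖x_{k+1} − 𝐱̄_{k+1}‖² ≤ (1 − γ_kη_w + 24L_ξ²α_k²/(γ_kη_w))·E‖x_k − 𝐱̄_k‖² + (4α_k²/(γ_kη_w))·E‖y_k − 𝐲̄_k‖² + (4·n·α_k²/(γ_kη_w))·[ 6L_ξ²·E‖x̄_k − x*‖² + (3/n)·E‖e^q_k‖² + (3γ²/n)·E‖e^s_k‖² ] + (2γ_k/η_w)·E‖e^x_k‖². -/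
open MeasureTheory Finset
open scoped RealInnerProductSpace

noncomputable section

variable {n d : ℕ}

/-- The hybrid variance-reduction error matrix `e^q = q − g`, whose `i`-th row is
`q_i − ∇fᵢ(x_i)`. -/
def eqerr (f : Fin n → EuclideanSpace ℝ (Fin d) → ℝ)
    (Q A : Fin n → EuclideanSpace ℝ (Fin d)) : Fin n → EuclideanSpace ℝ (Fin d) :=
  fun i => Q i - gradient (f i) (A i)


/-- Squared norm in `EuclideanSpace` as a sum of squared coordinates. -/
lemma enorm_sq_eq {d : ℕ} (v : EuclideanSpace ℝ (Fin d)) : ‖v‖ ^ 2 = ∑ l, (v l) ^ 2 := by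
  rw [EuclideanSpace.norm_eq, Real.sq_sqrt (by positivity)]
  simp [sq_abs]

/-- Coordinates of a linear combination of rows. -/
lemma sum_smul_apply {n d : ℕ} (m : Fin n → ℝ) (v : Fin n → EuclideanSpace ℝ (Fin d))
    (l : Fin d) : (∑ j, m j • v j) l = ∑ j, m j * v j l := by
  induction (Finset.univ : Finset (Fin n)) using Finset.cons_induction with
  | empty => simp
  | cons a s ha ih => rw [Finset.sum_cons, Finset.sum_cons, ← ih]; rfl

lemma dev2_nonneg {n d : ℕ} (A : Fin n → EuclideanSpace ℝ (Fin d)) : 0 ≤ dev2 A :=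
  Finset.sum_nonneg fun _ _ => sq_nonneg _

lemma fro2_nonneg {n d : ℕ} (A : Fin n → EuclideanSpace ℝ (Fin d)) : 0 ≤ fro2 A :=
  Finset.sum_nonneg fun _ _ => sq_nonneg _

/-- Variance is at most the second moment. -/
lemma dev2_le_fro2 {n d : ℕ} (hn : 0 < n) (A : Fin n → EuclideanSpace ℝ (Fin d)) :
    dev2 A ≤ fro2 A := by
  have hne : (n : ℝ) ≠ 0 := Nat.cast_ne_zero.mpr hn.ne'
  have hsum : ∑ i, A i = (n : ℝ) • rowAvg A := by
    rw [rowAvg, smul_smul, mul_inv_cancel₀ hne, one_smul]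
  have hexp : ∀ i : Fin n, ‖A i - rowAvg A‖ ^ 2
      = ‖A i‖ ^ 2 - 2 * ⟪A i, rowAvg A⟫ + ‖rowAvg A‖ ^ 2 := by
    intro i
    rw [norm_sub_sq_real]
  have h1 : dev2 A = fro2 A - 2 * ⟪∑ i, A i, rowAvg A⟫ + (n : ℝ) * ‖rowAvg A‖ ^ 2 := by
    rw [dev2, Finset.sum_congr rfl fun i _ => hexp i, Finset.sum_add_distrib,
      Finset.sum_sub_distrib, ← Finset.mul_sum, ← sum_inner]
    simp [fro2, Finset.sum_const, nsmul_eq_mul]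
  have h2 : ⟪∑ i, A i, rowAvg A⟫ = (n : ℝ) * ‖rowAvg A‖ ^ 2 := by
    rw [hsum, real_inner_smul_left, real_inner_self_eq_norm_sq]
  have h3 : 0 ≤ (n : ℝ) * ‖rowAvg A‖ ^ 2 := by positivity
  rw [h1, h2]; linarith

set_option maxHeartbeats 1000000 in
/-- **Lemma 3.7 (agreement error of VRA-DSGT).** -/
theorem vra_dsgt_agreement_error
    {Ω : Type*} {m0 : MeasurableSpace Ω} (μ : Measure Ω) [IsProbabilityMeasure μ]
    (hn : 0 < n) (hd : 0 < d)
    (f : Fin n → EuclideanSpace ℝ (Fin d) → ℝ)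
    (Lξ σξ μs ηw : ℝ) (xstar : EuclideanSpace ℝ (Fin d))
    (W : Matrix (Fin n) (Fin n) ℝ)
    (α γk lam : ℕ → ℝ) (γ : ℝ)
    (x y q ex es gt gt' : ℕ → Ω → Fin n → EuclideanSpace ℝ (Fin d))
    (𝒢 : ℕ → MeasurableSpace Ω)
    -- f is μ-strongly convex with minimizer xstar; each fᵢ is Lξ-smooth
    (hdiff : ∀ i, Differentiable ℝ (f i))
    (hLip : ∀ i a b, ‖gradient (f i) a - gradient (f i) b‖ ≤ Lξ * ‖a - b‖)
    (hμ : 0 < μs)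
    (hsc : ∀ a b, fglob f b ≥
      fglob f a + ⟪gradient (fglob f) a, b - a⟫ + μs / 2 * ‖a - b‖ ^ 2)
    (hopt : gradient (fglob f) xstar = 0)
    -- Assumption 3.2: W is nonnegative doubly stochastic, with spectral gap ηw
    (hWnn : ∀ i j, 0 ≤ W i j)
    (hWrow : ∀ i, ∑ j, W i j = 1) (hWcol : ∀ j, ∑ i, W i j = 1)
    (hηw : ηw ∈ Set.Ioc (0 : ℝ) 1)
    (hspec : ∀ c ∈ Set.Icc (0 : ℝ) 1, ∀ v : Fin n → ℝ,
      ∑ i, (∑ j, (mixW W c i j - (n : ℝ)⁻¹) * v j) ^ 2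
        ≤ (1 - c * ηw) ^ 2 * ∑ i, (v i) ^ 2)
    -- algorithm parameters
    (hα : ∀ k, 0 < α k) (hγk : ∀ k, γk k ∈ Set.Ioc (0 : ℝ) 1)
    (hlam : ∀ k, lam k ∈ Set.Ioc (0 : ℝ) 1) (hγ : γ ∈ Set.Ioc (0 : ℝ) 1)
    -- stochastic gradient oracle (Assumption 3.4): `gt k` is the stochastic gradient
    -- matrix `g̃_k` and `gt' (k+1)` the matrix `g̃'_{k+1}`, sampled independently of
    -- the history σ-algebra `𝒢 k` generated up to the computation of `x_{k+1}`
    (h𝒢 : ∀ k, 𝒢 k ≤ m0)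
    (hmx : ∀ k, Measurable[𝒢 k] (x k)) (hmx' : ∀ k, Measurable[𝒢 k] (x (k + 1)))
    (hmq : ∀ k, Measurable[𝒢 k] (q k))
    (hunb : ∀ k i, μ[fun ω => gt k ω i | 𝒢 k]
      =ᵐ[μ] fun ω => gradient (f i) (x k ω i))
    (hunb' : ∀ k i, μ[fun ω => gt' (k + 1) ω i | 𝒢 k]
      =ᵐ[μ] fun ω => gradient (f i) (x (k + 1) ω i))
    (hvar : ∀ k i, ∫ ω, ‖gt k ω i - gradient (f i) (x k ω i)‖ ^ 2 ∂μ ≤ σξ ^ 2)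
    (hvar' : ∀ k i,
      ∫ ω, ‖gt' (k + 1) ω i - gradient (f i) (x (k + 1) ω i)‖ ^ 2 ∂μ ≤ σξ ^ 2)
    (hLms : ∀ k i, ∫ ω, ‖gt' (k + 1) ω i - gt k ω i‖ ^ 2 ∂μ
      ≤ Lξ ^ 2 * ∫ ω, ‖x (k + 1) ω i - x k ω i‖ ^ 2 ∂μ)
    -- VRA-DSGT recursions
    (hxrec : ∀ k, 1 ≤ k → ∀ ω i, x (k + 1) ω i
      = wmul (mixW W (γk k)) (x k ω) i + γk k • ex k ω i - α k • y k ω i)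
    (hqrec : ∀ k, 1 ≤ k → ∀ ω i, q (k + 1) ω i
      = (1 - lam k) • (q k ω i - gt k ω i) + gt' (k + 1) ω i)
    (hyrec : ∀ k, 1 ≤ k → ∀ ω i, y (k + 1) ω i
      = wmul (mixW W γ) (y k ω) i
        + (q (k + 1) ω i + γ • es (k + 1) ω i) - (q k ω i + γ • es k ω i))
    (hy1 : ∀ ω, rowAvg (y 1 ω) = rowAvg (gmat f (x 1 ω))
      + rowAvg (eqerr f (q 1 ω) (x 1 ω)) + γ • rowAvg (es 1 ω))
    -- integrability of all second moments involved
    (hIy : ∀ k, Integrable (fun ω => dev2 (y k ω)) μ)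
    (hIx : ∀ k, Integrable (fun ω => dev2 (x k ω)) μ)
    (hIopt : ∀ k, Integrable (fun ω => ‖rowAvg (x k ω) - xstar‖ ^ 2) μ)
    (hIex : ∀ k, Integrable (fun ω => fro2 (ex k ω)) μ)
    (hIes : ∀ k, Integrable (fun ω => fro2 (es k ω)) μ)
    (hIeq : ∀ k, Integrable (fun ω => fro2 (eqerr f (q k ω) (x k ω))) μ) :
    ∀ k, 1 ≤ k →
      ∫ ω, dev2 (x (k + 1) ω) ∂μ
        ≤ (1 - γk k * ηw + 24 * Lξ ^ 2 * α k ^ 2 / (γk k * ηw)) *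
            ∫ ω, dev2 (x k ω) ∂μ
          + 4 * α k ^ 2 / (γk k * ηw) * ∫ ω, dev2 (y k ω) ∂μ
          + 4 * n * α k ^ 2 / (γk k * ηw) *
              (6 * Lξ ^ 2 * ∫ ω, ‖rowAvg (x k ω) - xstar‖ ^ 2 ∂μ
                + 3 / n * ∫ ω, fro2 (eqerr f (q k ω) (x k ω)) ∂μ
                + 3 * γ ^ 2 / n * ∫ ω, fro2 (es k ω) ∂μ)
          + 2 * γk k / ηw * ∫ ω, fro2 (ex k ω) ∂μ := by
  intro k hk
  obtain ⟨hc0, hc1⟩ := hγk k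
  obtain ⟨hη0, hη1⟩ := hηw
  have ha0 : 0 < α k := hα k
  have hn0 : (0 : ℝ) < n := by exact_mod_cast hn
  have hnne : (n : ℝ) ≠ 0 := ne_of_gt hn0
  set c : ℝ := γk k with hcdef
  set a : ℝ := α k with hadef
  set m : ℝ := c * ηw with hmdef
  have hm0 : 0 < m := mul_pos hc0 hη0
  have hρ0 : 0 ≤ 1 - m := by nlinarith
  -- row and column sums of the mixed matrix
  have hrow : ∀ i, ∑ j, mixW W c i j = 1 := by
    intro i
    simp [mixW, Matrix.add_apply, Matrix.smul_apply, Matrix.one_apply,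
      Finset.sum_add_distrib, ← Finset.mul_sum, hWrow i, Finset.sum_ite_eq]
  have hcol : ∀ j, ∑ i, mixW W c i j = 1 := by
    intro j
    simp [mixW, Matrix.add_apply, Matrix.smul_apply, Matrix.one_apply,
      Finset.sum_add_distrib, ← Finset.mul_sum, hWcol j, Finset.sum_ite_eq']
  -- pointwise agreement bound (multiplied through by m = c·ηw)
  have hpt : ∀ ω, m * dev2 (x (k + 1) ω)
      ≤ m * (1 - m) * dev2 (x k ω) + 2 * a ^ 2 * dev2 (y k ω)
        + 2 * c ^ 2 * fro2 (ex k ω) := by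
    intro ω
    set X := x k ω with hX
    set Y := y k ω with hY
    set E := ex k ω with hE
    set xb := rowAvg X with hxb
    set A : Fin n → EuclideanSpace ℝ (Fin d) :=
      fun i => ∑ j, (mixW W c i j - (n : ℝ)⁻¹) • (X j - xb) with hA
    set B : Fin n → EuclideanSpace ℝ (Fin d) :=
      fun i => c • (E i - rowAvg E) - a • (Y i - rowAvg Y) with hB
    -- the mixing part equals A
    have hApart : ∀ i, A i = wmul (mixW W c) X i - xb := by
      intro i
      have hzero : ∑ j, (mixW W c i j - (n : ℝ)⁻¹) = 0 := by
        rw [Finset.sum_sub_distrib, hrow i]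
        simp [Finset.sum_const, nsmul_eq_mul, mul_inv_cancel₀ hnne]
      have e1 : A i = (∑ j, (mixW W c i j - (n : ℝ)⁻¹) • X j)
          - (∑ j, (mixW W c i j - (n : ℝ)⁻¹)) • xb := by
        show (∑ j, (mixW W c i j - (n : ℝ)⁻¹) • (X j - xb)) = _
        rw [Finset.sum_smul, ← Finset.sum_sub_distrib]
        exact Finset.sum_congr rfl fun j _ => smul_sub _ _ _
      have e2 : (∑ j, (mixW W c i j - (n : ℝ)⁻¹) • X j)
          = wmul (mixW W c) X i - xb := by
        have : (∑ j, (mixW W c i j - (n : ℝ)⁻¹) • X j)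
            = (∑ j, mixW W c i j • X j) - ∑ j, (n : ℝ)⁻¹ • X j := by
          rw [← Finset.sum_sub_distrib]
          exact Finset.sum_congr rfl fun j _ => sub_smul _ _ _
        rw [this, ← Finset.smul_sum]
        rfl
      rw [e1, e2, hzero, zero_smul, sub_zero]
    -- row average of the next iterate
    have havg : rowAvg (x (k + 1) ω) = xb + c • rowAvg E - a • rowAvg Y := by
      have hsw : ∑ i, wmul (mixW W c) X i = ∑ j, X j := by
        show ∑ i, ∑ j, mixW W c i j • X j = ∑ j, X j
        rw [Finset.sum_comm]
        refine Finset.sum_congr rfl fun j _ => ?_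
        rw [← Finset.sum_smul, hcol j, one_smul]
      have hsum1 : ∑ i, x (k + 1) ω i
          = (∑ j, X j) + c • (∑ i, E i) - a • (∑ i, Y i) := by
        rw [Finset.sum_congr rfl fun i _ => hxrec k hk ω i]
        rw [Finset.sum_sub_distrib, Finset.sum_add_distrib, hsw,
          ← Finset.smul_sum, ← Finset.smul_sum]
      rw [rowAvg, hsum1, smul_sub, smul_add, hxb, rowAvg, rowAvg, rowAvg,
        smul_comm ((n : ℝ)⁻¹) c, smul_comm ((n : ℝ)⁻¹) a]
    -- decomposition of the deviation
    have hdec : ∀ i, x (k + 1) ω i - rowAvg (x (k + 1) ω) = A i + B i := by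
      intro i
      rw [hxrec k hk ω i, havg, hApart i, hB]
      simp only [smul_sub]
      abel
    have hdevEq : dev2 (x (k + 1) ω) = ∑ i, ‖A i + B i‖ ^ 2 := by
      rw [dev2]
      exact Finset.sum_congr rfl fun i _ => by rw [hdec i]
    set SA := ∑ i, ‖A i‖ ^ 2 with hSAdef
    set SB := ∑ i, ‖B i‖ ^ 2 with hSBdef
    set S := dev2 X with hSdef
    have h0SA : 0 ≤ SA := Finset.sum_nonneg fun _ _ => sq_nonneg _
    have h0SB : 0 ≤ SB := Finset.sum_nonneg fun _ _ => sq_nonneg _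
    have h0S : 0 ≤ S := dev2_nonneg X
    -- spectral bound on SA
    have hSA : SA ≤ (1 - m) ^ 2 * S := by
      have hAco : ∀ i l, A i l = ∑ j, (mixW W c i j - (n : ℝ)⁻¹) * ((X j - xb) l) :=
        fun i l => sum_smul_apply (fun j => mixW W c i j - (n : ℝ)⁻¹) (fun j => X j - xb) l
      have hAnorm : ∀ i, ‖A i‖ ^ 2
          = ∑ l, (∑ j, (mixW W c i j - (n : ℝ)⁻¹) * ((X j - xb) l)) ^ 2 := by
        intro i
        rw [enorm_sq_eq]
        exact Finset.sum_congr rfl fun l _ => by rw [hAco]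
      have hSx : S = ∑ l, ∑ i, ((X i - xb) l) ^ 2 := by
        rw [hSdef, dev2, Finset.sum_comm]
        exact Finset.sum_congr rfl fun i _ => by rw [enorm_sq_eq]
      calc SA = ∑ i, ∑ l, (∑ j, (mixW W c i j - (n : ℝ)⁻¹) * ((X j - xb) l)) ^ 2 :=
            Finset.sum_congr rfl fun i _ => hAnorm i
        _ = ∑ l, ∑ i, (∑ j, (mixW W c i j - (n : ℝ)⁻¹) * ((X j - xb) l)) ^ 2 :=
            Finset.sum_comm
        _ ≤ ∑ l, (1 - c * ηw) ^ 2 * ∑ i, ((X i - xb) l) ^ 2 := by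
            refine Finset.sum_le_sum fun l _ => ?_
            exact hspec c ⟨hc0.le, hc1⟩ (fun j => (X j - xb) l)
        _ = (1 - m) ^ 2 * ∑ l, ∑ i, ((X i - xb) l) ^ 2 := by
            rw [← Finset.mul_sum, hmdef]
        _ = (1 - m) ^ 2 * S := by rw [hSx]
    -- bound on SB
    have hSB : SB ≤ 2 * a ^ 2 * dev2 Y + 2 * c ^ 2 * fro2 E := by
      have hBi : ∀ i, ‖B i‖ ^ 2
          ≤ 2 * c ^ 2 * ‖E i - rowAvg E‖ ^ 2 + 2 * a ^ 2 * ‖Y i - rowAvg Y‖ ^ 2 := by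
        intro i
        have h1 : ‖B i‖ ≤ c * ‖E i - rowAvg E‖ + a * ‖Y i - rowAvg Y‖ := by
          rw [hB]
          refine le_trans (norm_sub_le _ _) ?_
          rw [norm_smul, norm_smul]
          simp [abs_of_pos hc0, abs_of_pos ha0, Real.norm_eq_abs]
        have h2 : 0 ≤ c * ‖E i - rowAvg E‖ := by positivity
        have h3 : 0 ≤ a * ‖Y i - rowAvg Y‖ := by positivity
        nlinarith [norm_nonneg (B i), sq_nonneg (c * ‖E i - rowAvg E‖ - a * ‖Y i - rowAvg Y‖)]
      calc SB ≤ ∑ i, (2 * c ^ 2 * ‖E i - rowAvg E‖ ^ 2 + 2 * a ^ 2 * ‖Y i - rowAvg Y‖ ^ 2) :=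
            Finset.sum_le_sum fun i _ => hBi i
        _ = 2 * c ^ 2 * dev2 E + 2 * a ^ 2 * dev2 Y := by
            rw [Finset.sum_add_distrib, ← Finset.mul_sum, ← Finset.mul_sum, dev2, dev2]
        _ ≤ 2 * a ^ 2 * dev2 Y + 2 * c ^ 2 * fro2 E := by
            have := dev2_le_fro2 hn E
            nlinarith [sq_nonneg c]
    -- Cauchy–Schwarz across rows
    have hCS : ∑ i, ‖A i‖ * ‖B i‖ ≤ Real.sqrt SA * Real.sqrt SB := by
      have hnn : 0 ≤ ∑ i, ‖A i‖ * ‖B i‖ :=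
        Finset.sum_nonneg fun i _ => mul_nonneg (norm_nonneg _) (norm_nonneg _)
      have h := Finset.sum_mul_sq_le_sq_mul_sq Finset.univ (fun i => ‖A i‖) (fun i => ‖B i‖)
      calc ∑ i, ‖A i‖ * ‖B i‖ = Real.sqrt ((∑ i, ‖A i‖ * ‖B i‖) ^ 2) :=
            (Real.sqrt_sq hnn).symm
        _ ≤ Real.sqrt (SA * SB) := Real.sqrt_le_sqrt h
        _ = Real.sqrt SA * Real.sqrt SB := Real.sqrt_mul h0SA _
    have hstep : dev2 (x (k + 1) ω) ≤ SA + 2 * (Real.sqrt SA * Real.sqrt SB) + SB := by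
      have hexp : ∀ i : Fin n, ‖A i + B i‖ ^ 2
          ≤ ‖A i‖ ^ 2 + 2 * (‖A i‖ * ‖B i‖) + ‖B i‖ ^ 2 := by
        intro i
        nlinarith [norm_add_le (A i) (B i), norm_nonneg (A i + B i),
          norm_nonneg (A i), norm_nonneg (B i)]
      calc dev2 (x (k + 1) ω) = ∑ i, ‖A i + B i‖ ^ 2 := hdevEq
        _ ≤ ∑ i, (‖A i‖ ^ 2 + 2 * (‖A i‖ * ‖B i‖) + ‖B i‖ ^ 2) :=
            Finset.sum_le_sum fun i _ => hexp i
        _ = SA + 2 * (∑ i, ‖A i‖ * ‖B i‖) + SB := by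
            rw [Finset.sum_add_distrib, Finset.sum_add_distrib, ← Finset.mul_sum]
        _ ≤ SA + 2 * (Real.sqrt SA * Real.sqrt SB) + SB := by linarith
    -- combine
    have hsA : Real.sqrt SA ≤ (1 - m) * Real.sqrt S := by
      have : Real.sqrt SA ≤ Real.sqrt ((1 - m) ^ 2 * S) := Real.sqrt_le_sqrt hSA
      rwa [Real.sqrt_mul (sq_nonneg _), Real.sqrt_sq hρ0] at this
    have hu2 : (Real.sqrt S) ^ 2 = S := Real.sq_sqrt h0S
    have hv2 : (Real.sqrt SB) ^ 2 = SB := Real.sq_sqrt h0SB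
    have hp2 : (Real.sqrt SA) ^ 2 = SA := Real.sq_sqrt h0SA
    have hu0 : 0 ≤ Real.sqrt S := Real.sqrt_nonneg _
    have hv0 : 0 ≤ Real.sqrt SB := Real.sqrt_nonneg _
    have hp0 : 0 ≤ Real.sqrt SA := Real.sqrt_nonneg _
    -- key AM–GM estimate
    have e3 : 2 * m * (Real.sqrt S * Real.sqrt SB) ≤ m ^ 2 * S + SB := by
      nlinarith [sq_nonneg (m * Real.sqrt S - Real.sqrt SB)]
    have e6 : Real.sqrt SA * Real.sqrt SB ≤ (1 - m) * (Real.sqrt S * Real.sqrt SB) := by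
      nlinarith [mul_le_mul_of_nonneg_right hsA hv0]
    have e5 : (1 - m) * (2 * m * (Real.sqrt S * Real.sqrt SB))
        ≤ (1 - m) * (m ^ 2 * S + SB) := mul_le_mul_of_nonneg_left e3 hρ0
    have e1 : m * dev2 (x (k + 1) ω)
        ≤ m * SA + m * (2 * (Real.sqrt SA * Real.sqrt SB)) + m * SB := by
      calc m * dev2 (x (k + 1) ω)
          ≤ m * (SA + 2 * (Real.sqrt SA * Real.sqrt SB) + SB) :=
            mul_le_mul_of_nonneg_left hstep hm0.le
        _ = m * SA + m * (2 * (Real.sqrt SA * Real.sqrt SB)) + m * SB := by ring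
    have e4 : m * SA ≤ m * ((1 - m) ^ 2 * S) := mul_le_mul_of_nonneg_left hSA hm0.le
    have e7 : m * (2 * (Real.sqrt SA * Real.sqrt SB))
        ≤ (1 - m) * (2 * m * (Real.sqrt S * Real.sqrt SB)) := by
      have h := mul_le_mul_of_nonneg_left e6 (by positivity : (0 : ℝ) ≤ 2 * m)
      calc m * (2 * (Real.sqrt SA * Real.sqrt SB))
          = 2 * m * (Real.sqrt SA * Real.sqrt SB) := by ring
        _ ≤ 2 * m * ((1 - m) * (Real.sqrt S * Real.sqrt SB)) := h
        _ = (1 - m) * (2 * m * (Real.sqrt S * Real.sqrt SB)) := by ring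
    have id1 : m * ((1 - m) ^ 2 * S) + (1 - m) * (m ^ 2 * S + SB) + m * SB
        = m * (1 - m) * S + SB := by ring
    linarith [e1, e4, e5, e7, hSB, id1]
  -- integrate the pointwise bound
  have hIlhs : Integrable (fun ω => m * dev2 (x (k + 1) ω)) μ := (hIx (k + 1)).const_mul m
  have hIr1 : Integrable (fun ω => m * (1 - m) * dev2 (x k ω)) μ := (hIx k).const_mul _
  have hIr2 : Integrable (fun ω => 2 * a ^ 2 * dev2 (y k ω)) μ := (hIy k).const_mul _
  have hIr3 : Integrable (fun ω => 2 * c ^ 2 * fro2 (ex k ω)) μ := (hIex k).const_mul _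
  have hmain : m * ∫ ω, dev2 (x (k + 1) ω) ∂μ
      ≤ m * (1 - m) * ∫ ω, dev2 (x k ω) ∂μ + 2 * a ^ 2 * ∫ ω, dev2 (y k ω) ∂μ
        + 2 * c ^ 2 * ∫ ω, fro2 (ex k ω) ∂μ := by
    have hIr12 : Integrable
        (fun ω => m * (1 - m) * dev2 (x k ω) + 2 * a ^ 2 * dev2 (y k ω)) μ :=
      hIr1.add hIr2
    have hIrAll : Integrable (fun ω => m * (1 - m) * dev2 (x k ω)
        + 2 * a ^ 2 * dev2 (y k ω) + 2 * c ^ 2 * fro2 (ex k ω)) μ := hIr12.add hIr3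
    have h := integral_mono hIlhs hIrAll hpt
    rwa [integral_const_mul _ _, integral_add hIr12 hIr3, integral_add hIr1 hIr2,
      integral_const_mul _ _, integral_const_mul _ _, integral_const_mul _ _] at h
  -- nonnegativity of the second moments
  have hIx0 : 0 ≤ ∫ ω, dev2 (x k ω) ∂μ := integral_nonneg fun ω => dev2_nonneg _
  have hIy0 : 0 ≤ ∫ ω, dev2 (y k ω) ∂μ := integral_nonneg fun ω => dev2_nonneg _
  have hIex0 : 0 ≤ ∫ ω, fro2 (ex k ω) ∂μ := integral_nonneg fun ω => fro2_nonneg _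
  have hIo0 : 0 ≤ ∫ ω, ‖rowAvg (x k ω) - xstar‖ ^ 2 ∂μ :=
    integral_nonneg fun ω => sq_nonneg _
  have hIq0 : 0 ≤ ∫ ω, fro2 (eqerr f (q k ω) (x k ω)) ∂μ :=
    integral_nonneg fun ω => fro2_nonneg _
  have hIes0 : 0 ≤ ∫ ω, fro2 (es k ω) ∂μ := integral_nonneg fun ω => fro2_nonneg _
  -- divided form of the main estimate
  have hI1le : ∫ ω, dev2 (x (k + 1) ω) ∂μ
      ≤ (1 - m) * ∫ ω, dev2 (x k ω) ∂μ
        + 2 * a ^ 2 / m * ∫ ω, dev2 (y k ω) ∂μ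
        + 2 * c / ηw * ∫ ω, fro2 (ex k ω) ∂μ := by
    refine le_of_mul_le_mul_left ?_ hm0
    calc m * ∫ ω, dev2 (x (k + 1) ω) ∂μ
        ≤ m * (1 - m) * ∫ ω, dev2 (x k ω) ∂μ + 2 * a ^ 2 * ∫ ω, dev2 (y k ω) ∂μ
            + 2 * c ^ 2 * ∫ ω, fro2 (ex k ω) ∂μ := hmain
      _ = m * ((1 - m) * ∫ ω, dev2 (x k ω) ∂μ
            + 2 * a ^ 2 / m * ∫ ω, dev2 (y k ω) ∂μ
            + 2 * c / ηw * ∫ ω, fro2 (ex k ω) ∂μ) := by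
          rw [hmdef]
          field_simp
  -- final comparison with the stated right-hand side
  have t1 : 0 ≤ 24 * Lξ ^ 2 * a ^ 2 / m * ∫ ω, dev2 (x k ω) ∂μ :=
    mul_nonneg (by positivity) hIx0
  have t2 : 0 ≤ 2 * a ^ 2 / m * ∫ ω, dev2 (y k ω) ∂μ :=
    mul_nonneg (by positivity) hIy0
  have t3 : 0 ≤ 4 * n * a ^ 2 / m *
      (6 * Lξ ^ 2 * ∫ ω, ‖rowAvg (x k ω) - xstar‖ ^ 2 ∂μ
        + 3 / n * ∫ ω, fro2 (eqerr f (q k ω) (x k ω)) ∂μ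
        + 3 * γ ^ 2 / n * ∫ ω, fro2 (es k ω) ∂μ) := by
    refine mul_nonneg (by positivity) ?_
    refine add_nonneg (add_nonneg ?_ ?_) ?_
    · exact mul_nonneg (by positivity) hIo0
    · exact mul_nonneg (by positivity) hIq0
    · exact mul_nonneg (by positivity) hIes0
  have hsplit : (1 - γk k * ηw + 24 * Lξ ^ 2 * α k ^ 2 / (γk k * ηw)) *
            ∫ ω, dev2 (x k ω) ∂μ
          + 4 * α k ^ 2 / (γk k * ηw) * ∫ ω, dev2 (y k ω) ∂μ
          + 4 * n * α k ^ 2 / (γk k * ηw) *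
              (6 * Lξ ^ 2 * ∫ ω, ‖rowAvg (x k ω) - xstar‖ ^ 2 ∂μ
                + 3 / n * ∫ ω, fro2 (eqerr f (q k ω) (x k ω)) ∂μ
                + 3 * γ ^ 2 / n * ∫ ω, fro2 (es k ω) ∂μ)
          + 2 * γk k / ηw * ∫ ω, fro2 (ex k ω) ∂μ
      = ((1 - m) * ∫ ω, dev2 (x k ω) ∂μ
          + 2 * a ^ 2 / m * ∫ ω, dev2 (y k ω) ∂μ
          + 2 * c / ηw * ∫ ω, fro2 (ex k ω) ∂μ)
        + (24 * Lξ ^ 2 * a ^ 2 / m * ∫ ω, dev2 (x k ω) ∂μ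
          + 2 * a ^ 2 / m * ∫ ω, dev2 (y k ω) ∂μ
          + 4 * n * a ^ 2 / m *
              (6 * Lξ ^ 2 * ∫ ω, ‖rowAvg (x k ω) - xstar‖ ^ 2 ∂μ
                + 3 / n * ∫ ω, fro2 (eqerr f (q k ω) (x k ω)) ∂μ
                + 3 * γ ^ 2 / n * ∫ ω, fro2 (es k ω) ∂μ)) := by
    rw [hmdef, hcdef, hadef]
    ring
  rw [hsplit]
  linarith [hI1le, t1, t2, t3]

end
end

section
/- Gradient-increment bound (inequality (g-bound), pointwise form): suppose x_{k+1} = W_{γ_k}·x_k + γ_k·e^x_k − α_k·y_k with W doubly stochastic and W_{γ_k} := (1−γ_k)·I + γ_k·W, each f_i is differentiable with L-Lipschitz gradient, ∇f(x*) = 0 for f := (1/n)∑_i f_i, and ȳ_k = (1/n)∑_j ∇f_j(x_{j,k}) + γ·ē^s_k. Let g_k ∈ ℝ^{n×d} have i-th row ∇f_i(x_{i,k}). Then ‖g_{k+1} − g_k‖² ≤ (4L²γ_k²·‖W − I‖² + 16L⁴α_k²)·‖x_k − 𝐱̄_k‖² + 4L²γ_k²·‖e^x_k‖² + 4L²α_k²·‖y_k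 − 𝐲̄_k‖² + 16L⁴·n·α_k²·‖x̄_k − x*‖² + 8L²γ²α_k²·‖e^s_k‖². -/
open MeasureTheory Finset
open scoped RealInnerProductSpace

noncomputable section

variable {n d : ℕ}

lemma aux_cs {m : ℕ} (c : Fin m → ℝ) (a : Fin m → EuclideanSpace ℝ (Fin d)) :
    ‖∑ i, c i • a i‖ ^ 2 ≤ (∑ i, (c i) ^ 2) * ∑ i, ‖a i‖ ^ 2 := by
  have h1 : ‖∑ i, c i • a i‖ ≤ ∑ i, |c i| * ‖a i‖ := by
    refine (norm_sum_le _ _).trans ?_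
    refine Finset.sum_le_sum fun i _ => ?_
    rw [norm_smul, Real.norm_eq_abs]
  have h2 : (∑ i, |c i| * ‖a i‖) ^ 2 ≤ (∑ i, (c i) ^ 2) * ∑ i, ‖a i‖ ^ 2 := by
    have h := Finset.sum_mul_sq_le_sq_mul_sq Finset.univ (fun i => |c i|) (fun i => ‖a i‖)
    simpa [sq_abs] using h
  exact (pow_le_pow_left₀ (norm_nonneg _) h1 2).trans h2

lemma aux_two {E : Type*} [SeminormedAddCommGroup E] (a b : E) :
    ‖a + b‖ ^ 2 ≤ 2 * ‖a‖ ^ 2 + 2 * ‖b‖ ^ 2 := by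
  have h2 := pow_le_pow_left₀ (norm_nonneg (a + b)) (norm_add_le a b) 2
  nlinarith [h2, sq_nonneg (‖a‖ - ‖b‖)]

lemma aux_four {E : Type*} [SeminormedAddCommGroup E] (a b c e : E) :
    ‖a + b + c + e‖ ^ 2 ≤ 4 * (‖a‖ ^ 2 + ‖b‖ ^ 2 + ‖c‖ ^ 2 + ‖e‖ ^ 2) := by
  have h : ‖a + b + c + e‖ ≤ ‖a‖ + ‖b‖ + ‖c‖ + ‖e‖ := by
    calc ‖a + b + c + e‖ ≤ ‖a + b + c‖ + ‖e‖ := norm_add_le _ _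
      _ ≤ (‖a + b‖ + ‖c‖) + ‖e‖ := by gcongr; exact norm_add_le _ _
      _ ≤ (‖a‖ + ‖b‖ + ‖c‖) + ‖e‖ := by gcongr; exact norm_add_le _ _
  have h2 := pow_le_pow_left₀ (norm_nonneg (a + b + c + e)) h 2
  nlinarith [h2, sq_nonneg (‖a‖ - ‖b‖), sq_nonneg (‖a‖ - ‖c‖), sq_nonneg (‖a‖ - ‖e‖),
    sq_nonneg (‖b‖ - ‖c‖), sq_nonneg (‖b‖ - ‖e‖), sq_nonneg (‖c‖ - ‖e‖)]

lemma avg_sq {m : ℕ} (hm : 0 < m) (a : Fin m → EuclideanSpace ℝ (Fin d)) :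
    ‖(m : ℝ)⁻¹ • ∑ j, a j‖ ^ 2 ≤ (m : ℝ)⁻¹ * ∑ j, ‖a j‖ ^ 2 := by
  rw [Finset.smul_sum]
  refine (aux_cs (fun _ => (m : ℝ)⁻¹) a).trans ?_
  have hm' : (m : ℝ) ≠ 0 := Nat.cast_ne_zero.mpr hm.ne'
  have hc : ∑ _j : Fin m, ((m : ℝ)⁻¹) ^ 2 = (m : ℝ)⁻¹ := by
    rw [Finset.sum_const, Finset.card_univ, Fintype.card_fin, nsmul_eq_mul]
    field_simp
  rw [hc]

lemma grad_fglob (f : Fin n → EuclideanSpace ℝ (Fin d) → ℝ)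
    (hdiff : ∀ i, Differentiable ℝ (f i)) (x : EuclideanSpace ℝ (Fin d)) :
    gradient (fglob f) x = (n : ℝ)⁻¹ • ∑ i, gradient (f i) x := by
  have h2 : HasFDerivAt (fun z => ∑ i, f i z) (∑ i, fderiv ℝ (f i) x) x :=
    HasFDerivAt.fun_sum (fun i _ => (hdiff i x).hasFDerivAt)
  have h3 : HasFDerivAt (fglob f) ((n : ℝ)⁻¹ • ∑ i, fderiv ℝ (f i) x) x := by
    exact h2.const_mul ((n : ℝ)⁻¹)
  have h4 := (hasFDerivAt_iff_hasGradientAt.mp h3).gradient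
  rw [h4]
  simp [gradient, _root_.map_smul, _root_.map_sum]


set_option maxHeartbeats 1000000 in
/-- **Gradient-increment bound (inequality (g-bound), pointwise form)**. -/
theorem gradient_increment_bound
    (hn : 0 < n) (hd : 0 < d)
    (f : Fin n → EuclideanSpace ℝ (Fin d) → ℝ)
    (L : ℝ) (xstar : EuclideanSpace ℝ (Fin d))
    (hdiff : ∀ i, Differentiable ℝ (f i))
    (hLip : ∀ i a b, ‖gradient (f i) a - gradient (f i) b‖ ≤ L * ‖a - b‖)
    (hopt : gradient (fglob f) xstar = 0)
    (W : Matrix (Fin n) (Fin n) ℝ)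
    (hWnn : ∀ i j, 0 ≤ W i j)
    (hWrow : ∀ i, ∑ j, W i j = 1) (hWcol : ∀ j, ∑ i, W i j = 1)
    (αk γk γ : ℝ) (hαk : 0 < αk) (hγk : γk ∈ Set.Ioc (0 : ℝ) 1)
    (hγ : γ ∈ Set.Ioc (0 : ℝ) 1)
    (xk xk' yk ex es : Fin n → EuclideanSpace ℝ (Fin d))
    (hxrec : ∀ i, xk' i = wmul (mixW W γk) xk i + γk • ex i - αk • yk i)
    (hybar : rowAvg yk = rowAvg (gmat f xk) + γ • rowAvg es) :
    fro2 (fun i => gmat f xk' i - gmat f xk i)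
      ≤ (4 * L ^ 2 * γk ^ 2 * mFro2 (W - 1) + 16 * L ^ 4 * αk ^ 2) * dev2 xk
        + 4 * L ^ 2 * γk ^ 2 * fro2 ex
        + 4 * L ^ 2 * αk ^ 2 * dev2 yk
        + 16 * L ^ 4 * n * αk ^ 2 * ‖rowAvg xk - xstar‖ ^ 2
        + 8 * L ^ 2 * γ ^ 2 * αk ^ 2 * fro2 es := by
  have hnR : (0 : ℝ) < n := Nat.cast_pos.mpr hn
  have hnR' : (n : ℝ) ≠ 0 := hnR.ne'
  have hLip2 : ∀ i a b, ‖gradient (f i) a - gradient (f i) b‖ ^ 2 ≤ L ^ 2 * ‖a - b‖ ^ 2 := by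
    intro i a b
    have h := pow_le_pow_left₀ (norm_nonneg _) (hLip i a b) 2
    calc ‖gradient (f i) a - gradient (f i) b‖ ^ 2 ≤ (L * ‖a - b‖) ^ 2 := h
      _ = L ^ 2 * ‖a - b‖ ^ 2 := by ring
  set xb := rowAvg xk with hxb
  set yb := rowAvg yk with hyb
  set A : Fin n → EuclideanSpace ℝ (Fin d) := fun i => ∑ j, (W - 1) i j • (xk j - xb) with hA
  have e2 : ∀ i, ∑ j, (1 : Matrix (Fin n) (Fin n) ℝ) i j • xk j = xk i := by
    intro i; simp [Matrix.one_apply]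
  -- decomposition
  have hS : ∀ i, A i = (∑ j, W i j • xk j) - xk i := by
    intro i
    have e1 : ∑ j, W i j • xb = xb := by
      rw [← Finset.sum_smul, hWrow i, one_smul]
    have e3 : ∑ j, (1 : Matrix (Fin n) (Fin n) ℝ) i j • xb = xb := by
      simp [Matrix.one_apply]
    simp only [hA, Matrix.sub_apply, sub_smul, smul_sub, Finset.sum_sub_distrib]
    rw [e1, e2 i, e3]
    abel
  have hw : ∀ i, wmul (mixW W γk) xk i = (1 - γk) • xk i + γk • ∑ j, W i j • xk j := by
    intro i
    simp only [wmul, mixW, Matrix.add_apply, Matrix.smul_apply, Matrix.one_apply, smul_eq_mul,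
      add_smul, mul_smul, Finset.sum_add_distrib, ← Finset.smul_sum]
    congr 1
    congr 1
    simp [Matrix.one_apply]
  have hdecomp : ∀ i, xk' i - xk i
      = γk • A i + γk • ex i + (-αk) • (yk i - yb) + (-αk) • yb := by
    intro i
    rw [hxrec i, hw i, hS i]
    module
  -- pointwise bound
  have hpt : ∀ i, ‖xk' i - xk i‖ ^ 2
      ≤ 4 * (γk ^ 2 * ‖A i‖ ^ 2 + γk ^ 2 * ‖ex i‖ ^ 2 + αk ^ 2 * ‖yk i - yb‖ ^ 2
          + αk ^ 2 * ‖yb‖ ^ 2) := by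
    intro i
    rw [hdecomp i]
    refine (aux_four _ _ _ _).trans_eq ?_
    simp only [norm_smul, Real.norm_eq_abs, mul_pow, sq_abs]
    ring
  -- sum over i
  have hF : fro2 (fun i => xk' i - xk i)
      ≤ 4 * (γk ^ 2 * (∑ i, ‖A i‖ ^ 2) + γk ^ 2 * fro2 ex + αk ^ 2 * dev2 yk
          + (n : ℝ) * (αk ^ 2 * ‖yb‖ ^ 2)) := by
    unfold fro2 dev2
    rw [← hyb]
    calc ∑ i, ‖xk' i - xk i‖ ^ 2
        ≤ ∑ i, 4 * (γk ^ 2 * ‖A i‖ ^ 2 + γk ^ 2 * ‖ex i‖ ^ 2 + αk ^ 2 * ‖yk i - yb‖ ^ 2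
            + αk ^ 2 * ‖yb‖ ^ 2) := Finset.sum_le_sum fun i _ => hpt i
      _ = _ := by
          simp only [mul_add, Finset.sum_add_distrib, ← Finset.mul_sum, Finset.sum_const,
            Finset.card_univ, Fintype.card_fin, nsmul_eq_mul]
          ring
  -- bound on ∑ ‖A i‖²
  have hSA : (∑ i, ‖A i‖ ^ 2) ≤ mFro2 (W - 1) * dev2 xk := by
    calc ∑ i, ‖A i‖ ^ 2
        ≤ ∑ i, ((∑ j, ((W - 1) i j) ^ 2) * ∑ j, ‖xk j - xb‖ ^ 2) :=
          Finset.sum_le_sum fun i _ => aux_cs _ _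
      _ = mFro2 (W - 1) * dev2 xk := by
          rw [← Finset.sum_mul]; unfold mFro2 dev2; rw [← hxb]
  -- optimality
  have hKsum : ∑ j, gradient (f j) xstar = 0 := by
    rw [grad_fglob f hdiff xstar] at hopt
    rcases smul_eq_zero.mp hopt with h | h
    · exact absurd h (by positivity)
    · exact h
  -- decomposition of yb
  have hybar2 : yb = ((n : ℝ)⁻¹ • ∑ j, (gradient (f j) (xk j) - gradient (f j) xb)
      + (n : ℝ)⁻¹ • ∑ j, (gradient (f j) xb - gradient (f j) xstar)) + γ • rowAvg es := by
    rw [hybar]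
    congr 1
    have : rowAvg (gmat f xk) = (n : ℝ)⁻¹ • ∑ j, gradient (f j) (xk j) := rfl
    rw [this, ← smul_add, ← Finset.sum_add_distrib]
    simp_rw [sub_add_sub_cancel]
    rw [Finset.sum_sub_distrib, hKsum, sub_zero]
  -- bound on yb
  have hY : (n : ℝ) * ‖yb‖ ^ 2
      ≤ 4 * L ^ 2 * dev2 xk + 4 * (n : ℝ) * L ^ 2 * ‖xb - xstar‖ ^ 2 + 2 * γ ^ 2 * fro2 es := by
    set u1 := (n : ℝ)⁻¹ • ∑ j, (gradient (f j) (xk j) - gradient (f j) xb) with hu1d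
    set u2 := (n : ℝ)⁻¹ • ∑ j, (gradient (f j) xb - gradient (f j) xstar) with hu2d
    set u3 := γ • rowAvg es with hu3d
    have hy2 : ‖yb‖ ^ 2 ≤ 4 * ‖u1‖ ^ 2 + 4 * ‖u2‖ ^ 2 + 2 * ‖u3‖ ^ 2 := by
      rw [hybar2]
      have ha := aux_two (u1 + u2) u3
      have hb := aux_two u1 u2
      nlinarith
    have b1 : ‖u1‖ ^ 2 ≤ (n : ℝ)⁻¹ * (L ^ 2 * dev2 xk) := by
      refine (avg_sq hn _).trans ?_
      gcongr
      unfold dev2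
      rw [← hxb, Finset.mul_sum]
      exact Finset.sum_le_sum fun j _ => hLip2 j _ _
    have b2 : ‖u2‖ ^ 2 ≤ L ^ 2 * ‖xb - xstar‖ ^ 2 := by
      refine (avg_sq hn _).trans ?_
      have hb2 : ∑ j, ‖gradient (f j) xb - gradient (f j) xstar‖ ^ 2
          ≤ (n : ℝ) * (L ^ 2 * ‖xb - xstar‖ ^ 2) := by
        calc ∑ j, ‖gradient (f j) xb - gradient (f j) xstar‖ ^ 2
            ≤ ∑ _j : Fin n, L ^ 2 * ‖xb - xstar‖ ^ 2 :=
              Finset.sum_le_sum fun j _ => hLip2 j _ _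
          _ = (n : ℝ) * (L ^ 2 * ‖xb - xstar‖ ^ 2) := by
              rw [Finset.sum_const, Finset.card_univ, Fintype.card_fin, nsmul_eq_mul]
      calc (n : ℝ)⁻¹ * ∑ j, ‖gradient (f j) xb - gradient (f j) xstar‖ ^ 2
          ≤ (n : ℝ)⁻¹ * ((n : ℝ) * (L ^ 2 * ‖xb - xstar‖ ^ 2)) := by
            gcongr
        _ = L ^ 2 * ‖xb - xstar‖ ^ 2 := by field_simp
    have b3 : ‖u3‖ ^ 2 ≤ γ ^ 2 * ((n : ℝ)⁻¹ * fro2 es) := by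
      rw [hu3d, norm_smul, Real.norm_eq_abs, mul_pow, sq_abs]
      gcongr
      exact avg_sq hn es
    have q1 : (n : ℝ) * ‖u1‖ ^ 2 ≤ L ^ 2 * dev2 xk := by
      calc (n : ℝ) * ‖u1‖ ^ 2 ≤ (n : ℝ) * ((n : ℝ)⁻¹ * (L ^ 2 * dev2 xk)) :=
            mul_le_mul_of_nonneg_left b1 hnR.le
        _ = L ^ 2 * dev2 xk := by field_simp
    have q2 : (n : ℝ) * ‖u2‖ ^ 2 ≤ (n : ℝ) * (L ^ 2 * ‖xb - xstar‖ ^ 2) :=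
      mul_le_mul_of_nonneg_left b2 hnR.le
    have q3 : (n : ℝ) * ‖u3‖ ^ 2 ≤ γ ^ 2 * fro2 es := by
      calc (n : ℝ) * ‖u3‖ ^ 2 ≤ (n : ℝ) * (γ ^ 2 * ((n : ℝ)⁻¹ * fro2 es)) :=
            mul_le_mul_of_nonneg_left b3 hnR.le
        _ = γ ^ 2 * fro2 es := by field_simp
    calc (n : ℝ) * ‖yb‖ ^ 2
        ≤ (n : ℝ) * (4 * ‖u1‖ ^ 2 + 4 * ‖u2‖ ^ 2 + 2 * ‖u3‖ ^ 2) :=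
          mul_le_mul_of_nonneg_left hy2 hnR.le
      _ = 4 * ((n : ℝ) * ‖u1‖ ^ 2) + 4 * ((n : ℝ) * ‖u2‖ ^ 2) + 2 * ((n : ℝ) * ‖u3‖ ^ 2) := by
          ring
      _ ≤ 4 * (L ^ 2 * dev2 xk) + 4 * ((n : ℝ) * (L ^ 2 * ‖xb - xstar‖ ^ 2))
          + 2 * (γ ^ 2 * fro2 es) := by linarith
      _ = 4 * L ^ 2 * dev2 xk + 4 * (n : ℝ) * L ^ 2 * ‖xb - xstar‖ ^ 2 + 2 * γ ^ 2 * fro2 es := by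
          ring
  -- Lipschitz step
  have hstep1 : fro2 (fun i => gmat f xk' i - gmat f xk i)
      ≤ L ^ 2 * fro2 (fun i => xk' i - xk i) := by
    unfold fro2 gmat
    rw [Finset.mul_sum]
    exact Finset.sum_le_sum fun i _ => hLip2 i _ _
  have hL2 : (0 : ℝ) ≤ L ^ 2 := sq_nonneg L
  have m1 := mul_le_mul_of_nonneg_left hF hL2
  have c2 : (0 : ℝ) ≤ 4 * L ^ 2 * γk ^ 2 := by positivity
  have m2 := mul_le_mul_of_nonneg_left hSA c2
  have c3 : (0 : ℝ) ≤ 4 * L ^ 2 * αk ^ 2 := by positivity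
  have m3 := mul_le_mul_of_nonneg_left hY c3
  linarith [hstep1, m1, m2, m3]


end
end
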